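/- arXiv:0811.0783 — 6 statements merged into one kernel-verified Lean document; each statement's English description precedes it below -/
import Mathlib

section
/- (Busch's joint measurability criterion) Let a, b ∈ ℝ³ with ‖a‖ ≤ 1 and ‖b‖ ≤ 1. Then the simple qubit observables E^{1,a} and E^{1,b} are jointly measurable if and only if ‖a + b‖ + ‖a − b‖ ≤ 2. -/
open Matrix
open scoped ComplexOrder

noncomputable section

/-- 2×2 complex matrices. -/
abbrev Mat2 := Matrix (Fin 2) (Fin 2) ℂ

/-- The Pauli matrix σ₁. -/
def sigma1 : Mat2 := !![0, 1; 1, 0]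
/-- The Pauli matrix σ₂. -/
def sigma2 : Mat2 := !![0, -Complex.I; Complex.I, 0]
/-- The Pauli matrix σ₃. -/
def sigma3 : Mat2 := !![1, 0; 0, -1]

/-- ℝ³ with the Euclidean norm. -/
abbrev E3 := EuclideanSpace ℝ (Fin 3)

/-- For `v ∈ ℝ³`, `v·σ = v₁σ₁ + v₂σ₂ + v₃σ₃`. -/
def dotSigma (v : E3) : Mat2 := (v 0 : ℂ) • sigma1 + (v 1 : ℂ) • sigma2 + (v 2 : ℂ) • sigma3

/-- `A^{α,a} = (1/2)(α·I + a·σ)`. -/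
def Amat (α : ℝ) (a : E3) : Mat2 := (2 : ℂ)⁻¹ • ((α : ℂ) • (1 : Mat2) + dotSigma a)

/-- An operator is an effect if `0 ≤ A ≤ I` in the Loewner order. -/
def IsEffect (A : Mat2) : Prop := A.PosSemidef ∧ (1 - A).PosSemidef

/-- The Loewner order: `A ≤ B` iff `B - A` is positive semidefinite. -/
def loewnerLE (A B : Mat2) : Prop := (B - A).PosSemidef

/-- The simple (two-outcome) qubit observable `E^{α,a}`,
with `E^{α,a}(1) = A^{α,a}` and `E^{α,a}(0) = I - A^{α,a}`. -/
def Eobs (α : ℝ) (a : E3) : Fin 2 → Mat2 := fun i => if i = 1 then Amat α a else 1 - Amat α a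

/-- `G` is a joint observable of the two-outcome observables `E` and `F`. -/
def IsJointObs (G : Fin 2 → Fin 2 → Mat2) (E F : Fin 2 → Mat2) : Prop :=
  (∀ i j, (G i j).PosSemidef) ∧ (∑ i, ∑ j, G i j) = 1 ∧
    (∀ i, (∑ j, G i j) = E i) ∧ (∀ j, (∑ i, G i j) = F j)

/-- Joint measurability of two two-outcome observables. -/
def JointlyMeasurable2 (E F : Fin 2 → Mat2) : Prop := ∃ G, IsJointObs G E F

/-- `G` is a joint observable of the three two-outcome observables `E`, `F` and `K`. -/
def IsJointObs3 (G : Fin 2 → Fin 2 → Fin 2 → Mat2) (E F K : Fin 2 → Mat2) : Prop :=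
  (∀ i j k, (G i j k).PosSemidef) ∧ (∑ i, ∑ j, ∑ k, G i j k) = 1 ∧
    (∀ i, (∑ j, ∑ k, G i j k) = E i) ∧ (∀ j, (∑ i, ∑ k, G i j k) = F j) ∧
    (∀ k, (∑ i, ∑ j, G i j k) = K k)

/-- Joint measurability of three two-outcome observables. -/
def JointlyMeasurable3 (E F K : Fin 2 → Mat2) : Prop := ∃ G, IsJointObs3 G E F K

/-! A Hermitian 2×2 matrix is `A^{t,m}` for some `(t, m) ∈ ℝ × ℝ³`, and it is positive
semidefinite iff its trace `t` and its determinant `(t² - ‖m‖²)/4` are nonnegative, i.e. iff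
`‖m‖ ≤ t`. A joint observable `G` of two binary observables `E`, `F` is determined by
`P = G(1,1)`, subject to `0 ≤ P`, `P ≤ E(1)`, `P ≤ F(1)` and `E(1) + F(1) - I ≤ P`. For
`P = A^{t,m}` these read `‖m‖ ≤ t`, `‖a - m‖ ≤ 1 - t`, `‖b - m‖ ≤ 1 - t` and `‖m - a - b‖ ≤ t`.
Adding them in pairs and using the triangle inequality gives `‖a + b‖ + ‖a - b‖ ≤ 2`; conversely
`m = (a + b)/2`, `t = ‖a + b‖/2` satisfies all four. -/

namespace Matrix.IsHermitian

variable {𝕜 : Type*} [RCLike 𝕜] {A : Matrix (Fin 2) (Fin 2) 𝕜}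

theorem posSemidef_iff_trace_nonneg_and_det_nonneg (hA : A.IsHermitian) :
    A.PosSemidef ↔ 0 ≤ A.trace ∧ 0 ≤ A.det := by
  refine ⟨fun h => ⟨h.trace_nonneg, h.det_nonneg⟩, fun ⟨htr, hdet⟩ => ?_⟩
  rw [hA.trace_eq_sum_eigenvalues, Fin.sum_univ_two, ← RCLike.ofReal_add,
    RCLike.ofReal_nonneg] at htr
  rw [hA.det_eq_prod_eigenvalues, Fin.prod_univ_two, ← RCLike.ofReal_mul,
    RCLike.ofReal_nonneg] at hdet
  rw [hA.posSemidef_iff_eigenvalues_nonneg, Pi.le_def, Fin.forall_fin_two, Pi.zero_apply,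
    Pi.zero_apply]
  constructor <;> nlinarith

end Matrix.IsHermitian

lemma jointlyMeasurable2_iff_exists_posSemidef {E F : Fin 2 → Mat2} (hE : E 0 = 1 - E 1)
    (hF : F 0 = 1 - F 1) :
    JointlyMeasurable2 E F ↔ ∃ P : Mat2, P.PosSemidef ∧ (E 1 - P).PosSemidef ∧
      (F 1 - P).PosSemidef ∧ (1 - E 1 - F 1 + P).PosSemidef := by
  constructor
  · rintro ⟨G, hG, hsum, hGE, hGF⟩
    simp only [Fin.sum_univ_two] at hsum hGE hGF
    refine ⟨G 1 1, hG 1 1, ?_, ?_, ?_⟩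
    · convert hG 1 0 using 1; rw [← hGE 1]; abel
    · convert hG 0 1 using 1; rw [← hGF 1]; abel
    · convert hG 0 0 using 1; rw [← hsum, ← hGE 1, ← hGF 1]; abel
  · rintro ⟨P, hP, hEP, hFP, hEFP⟩
    refine ⟨![![1 - E 1 - F 1 + P, F 1 - P], ![E 1 - P, P]], ?_, ?_, ?_, ?_⟩
    · simp [Fin.forall_fin_two, *]
    · simp only [Fin.sum_univ_two, cons_val_zero, cons_val_one]
      abel
    · simp only [Fin.forall_fin_two, Fin.sum_univ_two, cons_val_zero, cons_val_one, hE]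
      constructor <;> abel
    · simp only [Fin.forall_fin_two, Fin.sum_univ_two, cons_val_zero, cons_val_one, hF]
      constructor <;> abel

lemma exists_norm_sub_le_iff_norm_add_add_norm_sub_le_two {V : Type*} [SeminormedAddCommGroup V]
    [NormedSpace ℝ V] (a b : V) :
    (∃ (t : ℝ) (m : V), ‖m‖ ≤ t ∧ ‖a - m‖ ≤ 1 - t ∧ ‖b - m‖ ≤ 1 - t ∧ ‖m - a - b‖ ≤ t) ↔
      ‖a + b‖ + ‖a - b‖ ≤ 2 := by
  constructor
  · rintro ⟨t, m, hm, ham, hbm, habm⟩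
    have hadd : ‖a + b‖ ≤ ‖m‖ + ‖m - a - b‖ := by
      simpa [sub_sub] using norm_sub_le m (m - a - b)
    have hsub : ‖a - b‖ ≤ ‖a - m‖ + ‖b - m‖ := by simpa using norm_sub_le (a - m) (b - m)
    linarith
  · intro h
    have norm_half : ∀ v : V, ‖(2 : ℝ)⁻¹ • v‖ = ‖v‖ / 2 := fun v => by
      rw [norm_smul, Real.norm_of_nonneg (by norm_num)]; ring
    refine ⟨‖a + b‖ / 2, (2 : ℝ)⁻¹ • (a + b), (norm_half _).le, ?_, ?_, ?_⟩
    · rw [show a - (2 : ℝ)⁻¹ • (a + b) = (2 : ℝ)⁻¹ • (a - b) by module, norm_half]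
      linarith
    · rw [show b - (2 : ℝ)⁻¹ • (a + b) = (2 : ℝ)⁻¹ • (b - a) by module, norm_half, norm_sub_rev]
      linarith
    · rw [show (2 : ℝ)⁻¹ • (a + b) - a - b = (2 : ℝ)⁻¹ • -(a + b) by module, norm_half, norm_neg]

lemma Amat_eq (t : ℝ) (m : E3) :
    Amat t m = !![(t + m 2 : ℂ) / 2, (m 0 - m 1 * Complex.I) / 2;
      (m 0 + m 1 * Complex.I) / 2, (t - m 2 : ℂ) / 2] := by
  ext i j
  fin_cases i <;> fin_cases j <;> simp [Amat, dotSigma, sigma1, sigma2, sigma3] <;> ring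

lemma Amat_add (s t : ℝ) (m n : E3) : Amat s m + Amat t n = Amat (s + t) (m + n) := by
  simp only [Amat, dotSigma, PiLp.add_apply]
  push_cast
  module

lemma Amat_sub (s t : ℝ) (m n : E3) : Amat s m - Amat t n = Amat (s - t) (m - n) := by
  simp only [Amat, dotSigma, PiLp.sub_apply]
  push_cast
  module

lemma one_eq_Amat : (1 : Mat2) = Amat 2 0 := by
  simp [Amat, dotSigma]

lemma isHermitian_Amat (t : ℝ) (m : E3) : (Amat t m).IsHermitian := by
  rw [Amat_eq]
  ext i j
  fin_cases i <;> fin_cases j <;> simp [Complex.ext_iff]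

lemma Matrix.IsHermitian.exists_eq_Amat {M : Mat2} (hM : M.IsHermitian) :
    ∃ t m, M = Amat t m := by
  refine ⟨(M 0 0).re + (M 1 1).re,
    WithLp.toLp 2 ![2 * (M 1 0).re, 2 * (M 1 0).im, (M 0 0).re - (M 1 1).re], ?_⟩
  have h00 := hM.apply 0 0
  have h11 := hM.apply 1 1
  have h01 := hM.apply 0 1
  rw [Amat_eq]
  ext i j
  fin_cases i <;> fin_cases j <;> simp [Complex.ext_iff] at h00 h11 h01 ⊢ <;> grind

lemma trace_Amat (t : ℝ) (m : E3) : (Amat t m).trace = t := by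
  rw [Amat_eq, Matrix.trace_fin_two_of]
  ring

lemma det_Amat (t : ℝ) (m : E3) : (Amat t m).det = ((t ^ 2 - ‖m‖ ^ 2) / 4 : ℝ) := by
  rw [Amat_eq, Matrix.det_fin_two_of, EuclideanSpace.norm_sq_eq, Fin.sum_univ_three]
  simp only [Real.norm_eq_abs, sq_abs]
  push_cast
  linear_combination (m 1 : ℂ) ^ 2 / 4 * Complex.I_sq

lemma posSemidef_Amat_iff (t : ℝ) (m : E3) : (Amat t m).PosSemidef ↔ ‖m‖ ≤ t := by
  rw [(isHermitian_Amat t m).posSemidef_iff_trace_nonneg_and_det_nonneg, trace_Amat, det_Amat,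
    Complex.zero_le_real, Complex.zero_le_real]
  constructor
  · rintro ⟨ht, hdet⟩
    exact (pow_le_pow_iff_left₀ (norm_nonneg m) ht two_ne_zero).mp (by linarith)
  · intro h
    have ht := (norm_nonneg m).trans h
    exact ⟨ht, by nlinarith [pow_le_pow_left₀ (norm_nonneg m) h 2]⟩

lemma exists_posSemidef_iff_exists_Amat {p : Mat2 → Prop} :
    (∃ P : Mat2, P.PosSemidef ∧ p P) ↔ ∃ t m, ‖m‖ ≤ t ∧ p (Amat t m) := by
  constructor
  · rintro ⟨P, hP, hpP⟩
    obtain ⟨t, m, rfl⟩ := hP.isHermitian.exists_eq_Amat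
    exact ⟨t, m, (posSemidef_Amat_iff t m).mp hP, hpP⟩
  · rintro ⟨t, m, hm, hpm⟩
    exact ⟨Amat t m, (posSemidef_Amat_iff t m).mpr hm, hpm⟩

lemma Eobs_one (α : ℝ) (a : E3) : Eobs α a 1 = Amat α a := rfl

lemma Eobs_zero (α : ℝ) (a : E3) : Eobs α a 0 = 1 - Eobs α a 1 := rfl

theorem busch_criterion_general (a b : E3) :
    JointlyMeasurable2 (Eobs 1 a) (Eobs 1 b) ↔ ‖a + b‖ + ‖a - b‖ ≤ 2 := by
  rw [jointlyMeasurable2_iff_exists_posSemidef (Eobs_zero 1 a) (Eobs_zero 1 b),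
    exists_posSemidef_iff_exists_Amat, ← exists_norm_sub_le_iff_norm_add_add_norm_sub_le_two]
  simp only [Eobs_one, one_eq_Amat, Amat_sub, Amat_add, posSemidef_Amat_iff]
  refine exists_congr fun t => exists_congr fun m => ?_
  rw [show (0 : E3) - a - b + m = m - a - b by abel, show (2 : ℝ) - 1 - 1 + t = t by ring]

/-- Busch: `E^{1,a}` and `E^{1,b}` are jointly measurable iff
`‖a + b‖ + ‖a - b‖ ≤ 2`. -/
theorem busch_criterion (a b : E3) (ha : ‖a‖ ≤ 1) (hb : ‖b‖ ≤ 1) :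
    JointlyMeasurable2 (Eobs 1 a) (Eobs 1 b) ↔ ‖a + b‖ + ‖a - b‖ ≤ 2 :=
  busch_criterion_general a b
end
end

section
/- (Liu–Li–Yu–Chen joint measurability criterion) Let a, b ∈ ℝ³ with a·b = 0 and ‖a‖ ≤ 1, and let β ∈ ℝ with ‖b‖ ≤ β ≤ 2 − ‖b‖. Then the simple qubit observables E^{1,a} and E^{β,b} are jointly measurable if and only if 2‖a‖ ≤ √(β² − ‖b‖²) + √((2−β)² − ‖b‖²). -/
open Matrix
open scoped ComplexOrder

noncomputable section

/-!
Every Hermitian `2 × 2` matrix is `Amat γ g` for some `γ ∈ ℝ`, `g ∈ ℝ³`, and `Amat γ g ≥ 0` iff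
`‖g‖ ≤ γ`. A joint observable `G` of two-outcome observables is determined by `G 1 1 = Amat γ g`,
so `E^{1,a}` and `E^{β,b}` are jointly measurable iff some `(γ, g)` satisfies `‖g‖ ≤ γ`,
`‖a - g‖ ≤ 1 - γ`, `‖b - g‖ ≤ β - γ` and `‖a + b - g‖ ≤ 1 - β + γ`.

Adding these in pairs, `g` lies in the ellipsoid with foci `0`, `b` and major axis `β`, and `g - a`
in the one with the same foci and major axis `2 - β`. For `a ⊥ b` the component along `a` of a point
of such an ellipsoid is at most half its minor axis, `√(ℓ² - ‖b‖²) / 2`, which gives necessity.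
Conversely, with `γ = β / 2` one can take `g = c • a + b / 2` on the perpendicular bisector of
`[0, b]`, with `c` chosen so that `‖c • a‖` and `‖(1 - c) • a‖` are at most the two minor semi-axes.
-/

open scoped InnerProductSpace

theorem Matrix.posSemidef_fin_two_iff {p q : ℝ} {z : ℂ} :
    (!![(p : ℂ), z; star z, (q : ℂ)]).PosSemidef ↔ 0 ≤ p ∧ 0 ≤ q ∧ ‖z‖ ^ 2 ≤ p * q := by
  constructor
  · intro h
    have h00 : (0 : ℂ) ≤ p := by simpa using h.diag_nonneg (i := 0)
    have h11 : (0 : ℂ) ≤ q := by simpa using h.diag_nonneg (i := 1)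
    have hdet : (0 : ℂ) ≤ ((p * q - ‖z‖ ^ 2 : ℝ) : ℂ) := by
      have := h.det_nonneg
      rw [det_fin_two_of, Complex.star_def, Complex.mul_conj, Complex.normSq_eq_norm_sq] at this
      exact_mod_cast this
    simp only [Complex.zero_le_real] at h00 h11 hdet
    exact ⟨h00, h11, by linarith⟩
  · rintro ⟨hp, hq, hz⟩
    refine PosSemidef.of_dotProduct_mulVec_nonneg ?_ fun x => ?_
    · ext i j
      fin_cases i <;> fin_cases j <;> simp
    · have hform : star x ⬝ᵥ (!![(p : ℂ), z; star z, (q : ℂ)] *ᵥ x) =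
          ((p * ‖x 0‖ ^ 2 + q * ‖x 1‖ ^ 2 + 2 * (star (x 0) * z * x 1).re : ℝ) : ℂ) := by
        simp [dotProduct, mulVec, Fin.sum_univ_two, Complex.ext_iff, Complex.sq_norm,
          Complex.normSq_apply]
        constructor <;> ring
      have hre : |(star (x 0) * z * x 1).re| ≤ ‖x 0‖ * ‖z‖ * ‖x 1‖ := by
        simpa using Complex.abs_re_le_norm (star (x 0) * z * x 1)
      have hamgm : 2 * (‖x 0‖ * ‖z‖ * ‖x 1‖) ≤ p * ‖x 0‖ ^ 2 + q * ‖x 1‖ ^ 2 := by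
        refine (pow_le_pow_iff_left₀ (by positivity) (by positivity) two_ne_zero).mp ?_
        nlinarith [sq_nonneg (p * ‖x 0‖ ^ 2 - q * ‖x 1‖ ^ 2),
          mul_le_mul_of_nonneg_right hz (by positivity : 0 ≤ (‖x 0‖ * ‖x 1‖) ^ 2)]
      rw [hform, Complex.zero_le_real]
      linarith [neg_abs_le (star (x 0) * z * x 1).re]

theorem jointlyMeasurable2_iff {E F : Fin 2 → Mat2} (hE : E 0 = 1 - E 1) (hF : F 0 = 1 - F 1) :
    JointlyMeasurable2 E F ↔ ∃ C : Mat2, C.PosSemidef ∧ (E 1 - C).PosSemidef ∧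
      (F 1 - C).PosSemidef ∧ (1 - E 1 - F 1 + C).PosSemidef := by
  constructor
  · rintro ⟨G, hG, -, hrow, hcol⟩
    have h0 := hrow 0
    have h1 := hrow 1
    have h1' := hcol 1
    simp only [Fin.sum_univ_two] at h0 h1 h1'
    refine ⟨G 1 1, hG 1 1, ?_, ?_, ?_⟩
    · convert hG 1 0 using 1
      rw [← h1, add_sub_cancel_right]
    · convert hG 0 1 using 1
      rw [← h1', add_sub_cancel_right]
    · convert hG 0 0 using 1
      rw [← h1', ← hE, ← h0]
      abel
  · rintro ⟨C, hC, hEC, hFC, hEFC⟩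
    refine ⟨![![1 - E 1 - F 1 + C, F 1 - C], ![E 1 - C, C]], ?_, ?_, ?_, ?_⟩
    · intro i j
      fin_cases i <;> fin_cases j <;> assumption
    · simp [Fin.sum_univ_two]
    · intro i
      fin_cases i <;> simp [Fin.sum_univ_two, hE]
    · intro j
      fin_cases j <;> simp [Fin.sum_univ_two, hF]
      abel

theorem amat_eq_of (α : ℝ) (v : E3) :
    Amat α v = !![(((α + v 2) / 2 : ℝ) : ℂ), (v 0 - v 1 * Complex.I) / 2;
      star ((v 0 - v 1 * Complex.I) / 2), (((α - v 2) / 2 : ℝ) : ℂ)] := by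
  ext i j
  fin_cases i <;> fin_cases j <;>
    simp [Amat, dotSigma, sigma1, sigma2, sigma3, one_apply, div_eq_inv_mul, sub_eq_add_neg]

theorem amat_add (α β : ℝ) (v w : E3) : Amat α v + Amat β w = Amat (α + β) (v + w) := by
  simp only [Amat, dotSigma, PiLp.add_apply, Complex.ofReal_add]
  module

theorem amat_sub (α β : ℝ) (v w : E3) : Amat α v - Amat β w = Amat (α - β) (v - w) := by
  simp only [Amat, dotSigma, PiLp.sub_apply, Complex.ofReal_sub]
  module

theorem amat_two_zero : Amat 2 0 = 1 := by
  simp [Amat, dotSigma, smul_smul]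

theorem amat_posSemidef_iff {α : ℝ} {v : E3} : (Amat α v).PosSemidef ↔ ‖v‖ ≤ α := by
  have hz : ‖((v 0 : ℂ) - v 1 * Complex.I) / 2‖ ^ 2 = (v 0 ^ 2 + v 1 ^ 2) / 4 := by
    rw [norm_div, Complex.norm_ofNat, div_pow, Complex.sq_norm, Complex.normSq_apply]
    simp only [Complex.sub_re, Complex.sub_im, Complex.ofReal_re, Complex.ofReal_im,
      Complex.mul_re, Complex.mul_im, Complex.I_re, Complex.I_im]
    ring
  rw [amat_eq_of, posSemidef_fin_two_iff, hz, EuclideanSpace.norm_eq, Real.sqrt_le_iff]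
  simp only [Real.norm_eq_abs, sq_abs, Fin.sum_univ_three]
  constructor
  · rintro ⟨h0, h1, h⟩
    constructor <;> nlinarith
  · rintro ⟨hα, h⟩
    refine ⟨?_, ?_, by nlinarith⟩ <;> nlinarith [sq_nonneg (v 0), sq_nonneg (v 1)]

theorem exists_amat_eq_of_isHermitian {M : Mat2} (hM : M.IsHermitian) :
    ∃ (α : ℝ) (v : E3), M = Amat α v := by
  have h00 : star (M 0 0) = M 0 0 := congrFun₂ hM 0 0
  have h11 : star (M 1 1) = M 1 1 := congrFun₂ hM 1 1
  have h10 : star (M 1 0) = M 0 1 := congrFun₂ hM 0 1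
  refine ⟨(M 0 0).re + (M 1 1).re,
    !₂[2 * (M 1 0).re, 2 * (M 1 0).im, (M 0 0).re - (M 1 1).re], ?_⟩
  rw [Complex.ext_iff] at h00 h11 h10
  simp only [Complex.star_def, Complex.conj_re, Complex.conj_im] at h00 h11 h10
  ext i j
  fin_cases i <;> fin_cases j <;> simp [amat_eq_of, Complex.ext_iff] <;>
    (try constructor) <;> linarith

theorem one_sub_amat_sub_amat_add_amat (α β γ : ℝ) (a b g : E3) :
    1 - Amat α a - Amat β b + Amat γ g = Amat (2 - α - β + γ) (g - a - b) := by
  rw [← amat_two_zero, amat_sub, amat_sub, amat_add]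
  congr 1
  abel

theorem jointlyMeasurable2_eobs_iff {α β : ℝ} {a b : E3} :
    JointlyMeasurable2 (Eobs α a) (Eobs β b) ↔ ∃ (γ : ℝ) (g : E3), ‖g‖ ≤ γ ∧
      ‖a - g‖ ≤ α - γ ∧ ‖b - g‖ ≤ β - γ ∧ ‖a + b - g‖ ≤ 2 - α - β + γ := by
  rw [jointlyMeasurable2_iff rfl rfl]
  simp only [Eobs, ↓reduceIte]
  constructor
  · rintro ⟨C, hC, hEC, hFC, hEFC⟩
    obtain ⟨γ, g, rfl⟩ := exists_amat_eq_of_isHermitian hC.isHermitian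
    simp only [amat_sub, one_sub_amat_sub_amat_add_amat, amat_posSemidef_iff] at hC hEC hFC hEFC
    rw [sub_sub, norm_sub_rev] at hEFC
    exact ⟨γ, g, hC, hEC, hFC, hEFC⟩
  · rintro ⟨γ, g, hg, hag, hbg, habg⟩
    rw [← norm_sub_rev, ← sub_sub] at habg
    refine ⟨Amat γ g, ?_, ?_, ?_, ?_⟩ <;>
      simpa only [amat_sub, one_sub_amat_sub_amat_add_amat, amat_posSemidef_iff]

theorem exists_norm_smul_le_and_norm_one_sub_smul_le {E : Type*} [SeminormedAddCommGroup E]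
    [NormedSpace ℝ E] (a : E) {r s : ℝ} (hr : 0 ≤ r) (hs : 0 ≤ s) (h : ‖a‖ ≤ r + s) :
    ∃ c : ℝ, ‖c • a‖ ≤ r ∧ ‖(1 - c) • a‖ ≤ s := by
  rcases le_or_gt ‖a‖ r with har | har
  · exact ⟨1, by simpa using har, by simpa using hs⟩
  · have ha : 0 < ‖a‖ := hr.trans_lt har
    refine ⟨r / ‖a‖, ?_, ?_⟩ <;>
      rw [norm_smul, Real.norm_eq_abs]
    · rw [abs_of_nonneg (by positivity), div_mul_cancel₀ _ ha.ne']
    · rw [abs_of_nonneg (by rw [sub_nonneg, div_le_one ha]; exact har.le), sub_mul,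
        div_mul_cancel₀ _ ha.ne']
      linarith

section InnerProductSpace

variable {F : Type*} [NormedAddCommGroup F] [InnerProductSpace ℝ F]

theorem norm_sub_two_mul_inner_smul {u : F} (hu : ‖u‖ = 1) (v : F) :
    ‖v - (2 * ⟪v, u⟫_ℝ) • u‖ = ‖v‖ := by
  have hsq : ‖v - (2 * ⟪v, u⟫_ℝ) • u‖ ^ 2 = ‖v‖ ^ 2 := by
    rw [norm_sub_sq_real, real_inner_smul_right, norm_smul, hu, Real.norm_eq_abs, mul_one, sq_abs]
    ring
  exact (pow_left_inj₀ (norm_nonneg _) (norm_nonneg _) two_ne_zero).mp hsq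

theorem two_mul_abs_inner_le_sqrt {u b g : F} {ℓ : ℝ} (hu : ‖u‖ = 1) (hbu : ⟪b, u⟫_ℝ = 0)
    (hℓ : ‖g‖ + ‖b - g‖ ≤ ℓ) : 2 * |⟪g, u⟫_ℝ| ≤ √(ℓ ^ 2 - ‖b‖ ^ 2) := by
  set x := ⟪g, u⟫_ℝ
  -- `b + 2x u` is `g` plus the mirror image of `b - g` in the hyperplane `u⊥`.
  have hsplit : b + (2 * x) • u = g + ((b - g) - (2 * ⟪b - g, u⟫_ℝ) • u) := by
    rw [inner_sub_left, hbu]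
    module
  have hpyth : ‖b + (2 * x) • u‖ ^ 2 = ‖b‖ ^ 2 + (2 * |x|) ^ 2 := by
    rw [norm_add_sq_real, real_inner_smul_right, hbu, norm_smul, hu, Real.norm_eq_abs,
      abs_mul, abs_two]
    ring
  have hle : ‖b + (2 * x) • u‖ ≤ ℓ := by
    rw [hsplit]
    refine (norm_add_le _ _).trans ?_
    rwa [norm_sub_two_mul_inner_smul hu]
  apply Real.le_sqrt_of_sq_le
  nlinarith [norm_nonneg (b + (2 * x) • u)]

theorem two_mul_norm_le_of_norm_add_norm_le {a b g : F} {β : ℝ} (hab : ⟪a, b⟫_ℝ = 0)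
    (h₁ : ‖g‖ + ‖b - g‖ ≤ β) (h₂ : ‖a - g‖ + ‖a + b - g‖ ≤ 2 - β) :
    2 * ‖a‖ ≤ √(β ^ 2 - ‖b‖ ^ 2) + √((2 - β) ^ 2 - ‖b‖ ^ 2) := by
  rcases eq_or_ne a 0 with rfl | ha
  · simp only [norm_zero, mul_zero]
    positivity
  set u := ‖a‖⁻¹ • a
  have hu : ‖u‖ = 1 := norm_smul_inv_norm ha
  have hbu : ⟪b, u⟫_ℝ = 0 := by rw [real_inner_smul_right, real_inner_comm, hab, mul_zero]
  have hau : ⟪a, u⟫_ℝ = ‖a‖ := by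
    rw [real_inner_smul_right, real_inner_self_eq_norm_sq]
    field_simp
  have k₁ := two_mul_abs_inner_le_sqrt hu hbu h₁
  have k₂ := two_mul_abs_inner_le_sqrt (g := g - a) (ℓ := 2 - β) hu hbu
    (by rwa [norm_sub_rev, sub_sub_eq_add_sub, add_comm b])
  have hdiff : ‖a‖ = ⟪g, u⟫_ℝ - ⟪g - a, u⟫_ℝ := by rw [inner_sub_left, hau]; ring
  linarith [abs_sub (⟪g, u⟫_ℝ) (⟪g - a, u⟫_ℝ), le_abs_self (⟪g, u⟫_ℝ - ⟪g - a, u⟫_ℝ)]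

theorem norm_add_inv_two_smul_le {x b : F} {ℓ : ℝ} (hxb : ⟪x, b⟫_ℝ = 0) (hb : ‖b‖ ≤ ℓ)
    (hx : 2 * ‖x‖ ≤ √(ℓ ^ 2 - ‖b‖ ^ 2)) : ‖x + (2 : ℝ)⁻¹ • b‖ ≤ ℓ / 2 := by
  have hℓ : 0 ≤ ℓ := (norm_nonneg b).trans hb
  have hx' : (2 * ‖x‖) ^ 2 ≤ ℓ ^ 2 - ‖b‖ ^ 2 :=
    (Real.le_sqrt (by positivity) (by nlinarith [norm_nonneg b])).mp hx
  have hpyth : ‖x + (2 : ℝ)⁻¹ • b‖ ^ 2 = ‖x‖ ^ 2 + ‖b‖ ^ 2 / 4 := by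
    rw [norm_add_sq_real, real_inner_smul_right, hxb, norm_smul, Real.norm_eq_abs,
      abs_of_pos (by norm_num)]
    ring
  refine (pow_le_pow_iff_left₀ (norm_nonneg _) (by positivity) two_ne_zero).mp ?_
  rw [hpyth]
  linarith

theorem exists_norm_le_of_two_mul_norm_le {a b : F} {β : ℝ} (hab : ⟪a, b⟫_ℝ = 0)
    (hb₁ : ‖b‖ ≤ β) (hb₂ : β ≤ 2 - ‖b‖)
    (h : 2 * ‖a‖ ≤ √(β ^ 2 - ‖b‖ ^ 2) + √((2 - β) ^ 2 - ‖b‖ ^ 2)) :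
    ∃ g : F, ‖g‖ ≤ β / 2 ∧ ‖b - g‖ ≤ β / 2 ∧ ‖a - g‖ ≤ (2 - β) / 2 ∧
      ‖a + b - g‖ ≤ (2 - β) / 2 := by
  obtain ⟨c, hc, hc'⟩ := exists_norm_smul_le_and_norm_one_sub_smul_le a
    (r := √(β ^ 2 - ‖b‖ ^ 2) / 2) (s := √((2 - β) ^ 2 - ‖b‖ ^ 2) / 2)
    (by positivity) (by positivity) (by linarith)
  have key (k ℓ : ℝ) (hb : ‖b‖ ≤ ℓ) (hk : 2 * ‖k • a‖ ≤ √(ℓ ^ 2 - ‖b‖ ^ 2)) :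
      ‖k • a + (2 : ℝ)⁻¹ • b‖ ≤ ℓ / 2 :=
    norm_add_inv_two_smul_le (by rw [real_inner_smul_left, hab, mul_zero]) hb hk
  refine ⟨c • a + (2 : ℝ)⁻¹ • b, key c β hb₁ (by linarith), ?_, ?_, ?_⟩
  · rw [show b - (c • a + (2 : ℝ)⁻¹ • b) = (-c) • a + (2 : ℝ)⁻¹ • b by module]
    exact key _ _ hb₁ (by rw [neg_smul, norm_neg]; linarith)
  · rw [norm_sub_rev, show c • a + (2 : ℝ)⁻¹ • b - a = (-(1 - c)) • a + (2 : ℝ)⁻¹ • b by module]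
    exact key _ _ (by linarith) (by rw [neg_smul, norm_neg]; linarith)
  · rw [show a + b - (c • a + (2 : ℝ)⁻¹ • b) = (1 - c) • a + (2 : ℝ)⁻¹ • b by module]
    exact key _ _ (by linarith) (by linarith)

end InnerProductSpace

theorem liu_li_yu_chen_criterion_general (a b : E3) (hab : (inner ℝ a b : ℝ) = 0)
    (β : ℝ) (hb1 : ‖b‖ ≤ β) (hb2 : β ≤ 2 - ‖b‖) :
    JointlyMeasurable2 (Eobs 1 a) (Eobs β b) ↔
      2 * ‖a‖ ≤ Real.sqrt (β ^ 2 - ‖b‖ ^ 2) + Real.sqrt ((2 - β) ^ 2 - ‖b‖ ^ 2) := by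
  rw [jointlyMeasurable2_eobs_iff]
  constructor
  · rintro ⟨γ, g, hg, hag, hbg, habg⟩
    exact two_mul_norm_le_of_norm_add_norm_le (g := g) hab (by linarith) (by linarith)
  · intro h
    obtain ⟨g, hg, hbg, hag, habg⟩ := exists_norm_le_of_two_mul_norm_le hab hb1 hb2 h
    exact ⟨β / 2, g, hg, by linarith, by linarith, by linarith⟩

/-- Liu–Li–Yu–Chen: for `a ⊥ b`, `‖a‖ ≤ 1` and `‖b‖ ≤ β ≤ 2 - ‖b‖`,
the observables `E^{1,a}` and `E^{β,b}` are jointly measurable iff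
`2‖a‖ ≤ √(β² - ‖b‖²) + √((2-β)² - ‖b‖²)`. -/
theorem liu_li_yu_chen_criterion (a b : E3) (hab : (inner ℝ a b : ℝ) = 0) (ha : ‖a‖ ≤ 1)
    (β : ℝ) (hb1 : ‖b‖ ≤ β) (hb2 : β ≤ 2 - ‖b‖) :
    JointlyMeasurable2 (Eobs 1 a) (Eobs β b) ↔
      2 * ‖a‖ ≤ Real.sqrt (β ^ 2 - ‖b‖ ^ 2) + Real.sqrt ((2 - β) ^ 2 - ‖b‖ ^ 2) :=
  liu_li_yu_chen_criterion_general a b hab β hb1 hb2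
end
end

section
/- Let a, b, c ∈ ℝ³ be mutually orthogonal vectors, each of Euclidean norm l, where 1/√3 < l ≤ 1/√2. Then each of the pairs (E^{1,a}, E^{1,b}), (E^{1,a}, E^{1,c}), (E^{1,b}, E^{1,c}) is jointly measurable, but the triple E^{1,a}, E^{1,b}, E^{1,c} is not jointly measurable. -/
open Matrix
open scoped ComplexOrder

noncomputable section

/-!
Pairs: `r • 1 + v·σ` is positive semidefinite whenever `‖v‖ ≤ r`, so for orthogonal `a, b` with
`‖a‖² + ‖b‖² ≤ 1` the operators `G(i, j) = ¼ (1 + (±a ± b)·σ)` form a joint observable.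

Triple: if `‖±a ± b ± c‖ ≤ r` for all signs, each `W(i, j, k) = r • 1 - (±a ± b ± c)·σ` is
positive, hence `∑ tr (G(i, j, k) W(i, j, k)) ≥ 0` for any joint observable `G`. Summing out the
margins and using `(v·σ)² = ‖v‖² • 1` collapses this sum to `2 (r - ‖a‖² - ‖b‖² - ‖c‖²)`. For
orthogonal vectors `r = √(‖a‖² + ‖b‖² + ‖c‖²)` is admissible, which forces
`‖a‖² + ‖b‖² + ‖c‖² ≤ 1`, i.e. `l ≤ 1/√3`.
-/

open scoped MatrixOrder in
theorem Matrix.PosSemidef.trace_mul_nonneg {n 𝕜 : Type*} [Fintype n] [RCLike 𝕜]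
    {P Q : Matrix n n 𝕜} (hP : P.PosSemidef) (hQ : Q.PosSemidef) : 0 ≤ (P * Q).trace := by
  classical
  obtain ⟨B, rfl⟩ := CStarAlgebra.nonneg_iff_eq_star_mul_self.mp hQ.nonneg
  rw [← Matrix.mul_assoc, Matrix.trace_mul_comm, ← Matrix.mul_assoc]
  exact (hP.mul_mul_conjTranspose_same B).trace_nonneg

lemma dotSigma_add (u v : E3) : dotSigma (u + v) = dotSigma u + dotSigma v := by
  simp only [dotSigma, PiLp.add_apply, Complex.ofReal_add, add_smul]
  abel

lemma dotSigma_smul (t : ℝ) (v : E3) : dotSigma (t • v) = t • dotSigma v := by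
  simp only [dotSigma, PiLp.smul_apply, smul_eq_mul, Complex.ofReal_mul, mul_smul, smul_add,
    Complex.coe_smul]

lemma dotSigma_neg (v : E3) : dotSigma (-v) = -dotSigma v := by
  simpa using dotSigma_smul (-1) v

lemma isHermitian_dotSigma (v : E3) : (dotSigma v).IsHermitian := by
  ext i j
  fin_cases i <;> fin_cases j <;> simp [dotSigma, sigma1, sigma2, sigma3]

lemma dotSigma_mul_self (v : E3) : dotSigma v * dotSigma v = (‖v‖ ^ 2 : ℝ) • (1 : Mat2) := by
  rw [EuclideanSpace.real_norm_sq_eq, Fin.sum_univ_three]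
  ext i j
  fin_cases i <;> fin_cases j <;>
    simp [dotSigma, sigma1, sigma2, sigma3, Matrix.mul_apply, Complex.ext_iff, pow_two, mul_comm,
      add_comm]

lemma posSemidef_smul_one_add_dotSigma {r : ℝ} {v : E3} (hv : ‖v‖ ≤ r) :
    (r • (1 : Mat2) + dotSigma v).PosSemidef := by
  rcases (norm_nonneg v).eq_or_lt with hv0 | hv0
  · rw [norm_eq_zero.mp hv0.symm, show dotSigma 0 = 0 by simp [dotSigma], add_zero]
    exact PosSemidef.one.smul (hv0 ▸ hv)
  · set ρ := ‖v‖
    set X := ρ • (1 : Mat2) + dotSigma v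
    -- `(ρ + v·σ)² = 2ρ (ρ + v·σ)` because `(v·σ)² = ρ²`
    have hX : r • (1 : Mat2) + dotSigma v = (r - ρ) • (1 : Mat2) + (2 * ρ)⁻¹ • (Xᴴ * X) := by
      have hXX : Xᴴ * X = (2 * ρ) • X := by
        simp only [X, conjTranspose_add, conjTranspose_smul, conjTranspose_one,
          (isHermitian_dotSigma v).eq, add_mul, mul_add, smul_mul, mul_smul,
          one_mul, mul_one, dotSigma_mul_self, star_trivial, Algebra.mul_smul_comm, smul_add]
        module
      rw [hXX, smul_smul, inv_mul_cancel₀ (by positivity), one_smul]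
      module
    rw [hX]
    exact (PosSemidef.one.smul (sub_nonneg.mpr hv)).add
      ((posSemidef_conjTranspose_mul_self X).smul (by positivity))

lemma posSemidef_smul_one_sub_dotSigma {r : ℝ} {v : E3} (hv : ‖v‖ ≤ r) :
    (r • (1 : Mat2) - dotSigma v).PosSemidef := by
  simpa [dotSigma_neg, ← sub_eq_add_neg] using
    posSemidef_smul_one_add_dotSigma ((norm_neg v).trans_le hv)

def outcomeSign : Fin 2 → ℝ := ![-1, 1]

@[simp] lemma outcomeSign_zero : outcomeSign 0 = -1 := rfl
@[simp] lemma outcomeSign_one : outcomeSign 1 = 1 := rfl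

lemma norm_outcomeSign_smul (i : Fin 2) (v : E3) : ‖outcomeSign i • v‖ = ‖v‖ := by
  fin_cases i <;> simp

lemma Eobs_one_apply (v : E3) (i : Fin 2) :
    Eobs 1 v i = (2 : ℝ)⁻¹ • (1 + outcomeSign i • dotSigma v) := by
  fin_cases i
  · simp only [Eobs, Amat, Fin.zero_eta, Fin.isValue, zero_ne_one, ↓reduceIte, Complex.ofReal_one,
      Complex.ofReal_inv, Complex.ofReal_ofNat, ← Complex.coe_smul, one_smul, outcomeSign_zero]
    module
  · simp only [Eobs, Amat, Fin.mk_one, Fin.isValue, ↓reduceIte, Complex.ofReal_one,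
      Complex.ofReal_inv, Complex.ofReal_ofNat, ← Complex.coe_smul, one_smul, outcomeSign_one]

lemma sum_outcomeSign_smul_Eobs (v : E3) : ∑ i, outcomeSign i • Eobs 1 v i = dotSigma v := by
  simp only [Fin.sum_univ_two, Eobs_one_apply, outcomeSign_zero, outcomeSign_one]
  module

lemma sum_Eobs_mul_outcomeSign_smul (v : E3) :
    ∑ i, Eobs 1 v i * (outcomeSign i • dotSigma v) = (‖v‖ ^ 2 : ℝ) • (1 : Mat2) := by
  simp only [mul_smul_comm, ← smul_mul_assoc, ← Finset.sum_mul, sum_outcomeSign_smul_Eobs,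
    dotSigma_mul_self]

lemma jointlyMeasurable2_of_norm_add_le_of_norm_sub_le {a b : E3} (hadd : ‖a + b‖ ≤ 1)
    (hsub : ‖a - b‖ ≤ 1) : JointlyMeasurable2 (Eobs 1 a) (Eobs 1 b) := by
  refine ⟨fun i j ↦ (4 : ℝ)⁻¹ • ((1 : ℝ) • 1 + dotSigma (outcomeSign i • a + outcomeSign j • b)),
    fun i j ↦ (posSemidef_smul_one_add_dotSigma ?_).smul (by norm_num), ?_, fun i ↦ ?_,
    fun i ↦ ?_⟩
  · fin_cases i <;> fin_cases j <;>
      simp only [Fin.zero_eta, Fin.mk_one, outcomeSign_zero, outcomeSign_one, neg_smul, one_smul,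
        ← neg_add', norm_neg, neg_add_eq_sub, norm_sub_rev b, ← sub_eq_add_neg, hadd, hsub]
  · simp only [Fin.sum_univ_two, dotSigma_add, dotSigma_smul, outcomeSign_zero, outcomeSign_one]
    module
  all_goals fin_cases i <;>
    simp only [Fin.sum_univ_two, Eobs_one_apply, dotSigma_add, dotSigma_smul, Fin.zero_eta,
      Fin.mk_one, outcomeSign_zero, outcomeSign_one] <;>
    module

namespace IsJointObs3

variable {G : Fin 2 → Fin 2 → Fin 2 → Mat2} {E F K : Fin 2 → Mat2}

lemma sum_mul_fst (h : IsJointObs3 G E F K) (M : Fin 2 → Mat2) :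
    ∑ i, ∑ j, ∑ k, G i j k * M i = ∑ i, E i * M i := by
  simp_rw [← h.2.2.1, Finset.sum_mul]

lemma sum_mul_snd (h : IsJointObs3 G E F K) (M : Fin 2 → Mat2) :
    ∑ i, ∑ j, ∑ k, G i j k * M j = ∑ j, F j * M j := by
  rw [Finset.sum_comm]
  simp_rw [← h.2.2.2.1, Finset.sum_mul]

lemma sum_mul_thd (h : IsJointObs3 G E F K) (M : Fin 2 → Mat2) :
    ∑ i, ∑ j, ∑ k, G i j k * M k = ∑ k, K k * M k := by
  simp_rw [← h.2.2.2.2, Finset.sum_mul]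
  conv_rhs => rw [Finset.sum_comm]
  exact Finset.sum_congr rfl fun i _ ↦ Finset.sum_comm

lemma sum_mul_smul_one_sub_dotSigma {a b c : E3}
    (h : IsJointObs3 G (Eobs 1 a) (Eobs 1 b) (Eobs 1 c)) (r : ℝ) :
    ∑ i, ∑ j, ∑ k, G i j k *
        (r • 1 - dotSigma (outcomeSign i • a + outcomeSign j • b + outcomeSign k • c)) =
      (r - (‖a‖ ^ 2 + ‖b‖ ^ 2 + ‖c‖ ^ 2)) • (1 : Mat2) := by
  simp only [dotSigma_add, dotSigma_smul, mul_sub, mul_add, Finset.sum_sub_distrib,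
    Finset.sum_add_distrib]
  rw [h.sum_mul_fst (fun i ↦ outcomeSign i • dotSigma a),
    h.sum_mul_snd (fun j ↦ outcomeSign j • dotSigma b),
    h.sum_mul_thd (fun k ↦ outcomeSign k • dotSigma c)]
  simp only [← Finset.sum_mul, h.2.1, one_mul, sum_Eobs_mul_outcomeSign_smul]
  module

end IsJointObs3

lemma sum_sq_norm_le_of_jointlyMeasurable3 {a b c : E3} {r : ℝ}
    (hr : ∀ i j k, ‖outcomeSign i • a + outcomeSign j • b + outcomeSign k • c‖ ≤ r)
    (h : JointlyMeasurable3 (Eobs 1 a) (Eobs 1 b) (Eobs 1 c)) :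
    ‖a‖ ^ 2 + ‖b‖ ^ 2 + ‖c‖ ^ 2 ≤ r := by
  obtain ⟨G, hG⟩ := h
  have htrace := Fintype.sum_nonneg fun i ↦ Fintype.sum_nonneg fun j ↦ Fintype.sum_nonneg
    fun k ↦ (hG.1 i j k).trace_mul_nonneg (posSemidef_smul_one_sub_dotSigma (hr i j k))
  simp only [← trace_sum, hG.sum_mul_smul_one_sub_dotSigma, trace_smul, trace_one,
    Fintype.card_fin, Complex.real_smul] at htrace
  have : (0 : ℝ) ≤ (r - (‖a‖ ^ 2 + ‖b‖ ^ 2 + ‖c‖ ^ 2)) * 2 := by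
    exact_mod_cast htrace
  linarith

lemma jointlyMeasurable2_of_inner_eq_zero {a b : E3} (hab : (inner ℝ a b : ℝ) = 0)
    (h : ‖a‖ ^ 2 + ‖b‖ ^ 2 ≤ 1) : JointlyMeasurable2 (Eobs 1 a) (Eobs 1 b) := by
  apply jointlyMeasurable2_of_norm_add_le_of_norm_sub_le
  · rw [← sq_le_one_iff₀ (norm_nonneg _), norm_add_sq_real, hab]
    linarith
  · rw [← sq_le_one_iff₀ (norm_nonneg _), norm_sub_sq_real, hab]
    linarith

lemma norm_outcomeSign_smul_add_sq {a b c : E3} (hab : (inner ℝ a b : ℝ) = 0)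
    (hac : (inner ℝ a c : ℝ) = 0) (hbc : (inner ℝ b c : ℝ) = 0) (i j k : Fin 2) :
    ‖outcomeSign i • a + outcomeSign j • b + outcomeSign k • c‖ ^ 2 =
      ‖a‖ ^ 2 + ‖b‖ ^ 2 + ‖c‖ ^ 2 := by
  simp only [norm_add_sq_real, norm_outcomeSign_smul, inner_add_left, real_inner_smul_left,
    real_inner_smul_right, hab, hac, hbc]
  ring

lemma not_jointlyMeasurable3_of_inner_eq_zero {a b c : E3} (hab : (inner ℝ a b : ℝ) = 0)
    (hac : (inner ℝ a c : ℝ) = 0) (hbc : (inner ℝ b c : ℝ) = 0)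
    (h : 1 < ‖a‖ ^ 2 + ‖b‖ ^ 2 + ‖c‖ ^ 2) :
    ¬ JointlyMeasurable3 (Eobs 1 a) (Eobs 1 b) (Eobs 1 c) := by
  intro hJ
  have hle : ‖a‖ ^ 2 + ‖b‖ ^ 2 + ‖c‖ ^ 2 ≤ √(‖a‖ ^ 2 + ‖b‖ ^ 2 + ‖c‖ ^ 2) :=
    sum_sq_norm_le_of_jointlyMeasurable3 (fun i j k ↦ by
      rw [← norm_outcomeSign_smul_add_sq hab hac hbc i j k, Real.sqrt_sq (norm_nonneg _)]) hJ
  rw [Real.le_sqrt (by positivity) (by positivity)] at hle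
  nlinarith

/-- for mutually orthogonal `a`, `b`, `c` of common norm `l` with
`1/√3 < l ≤ 1/√2`, the observables `E^{1,a}`, `E^{1,b}`, `E^{1,c}` are pairwise jointly
measurable but not jointly measurable as a triple. -/
theorem pairwise_but_not_triple (a b c : E3) (l : ℝ)
    (hab : (inner ℝ a b : ℝ) = 0) (hac : (inner ℝ a c : ℝ) = 0) (hbc : (inner ℝ b c : ℝ) = 0)
    (hna : ‖a‖ = l) (hnb : ‖b‖ = l) (hnc : ‖c‖ = l)
    (hl1 : 1 / Real.sqrt 3 < l) (hl2 : l ≤ 1 / Real.sqrt 2) :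
    JointlyMeasurable2 (Eobs 1 a) (Eobs 1 b) ∧ JointlyMeasurable2 (Eobs 1 a) (Eobs 1 c) ∧
      JointlyMeasurable2 (Eobs 1 b) (Eobs 1 c) ∧
      ¬ JointlyMeasurable3 (Eobs 1 a) (Eobs 1 b) (Eobs 1 c) := by
  have hl : 0 < l := (by positivity : (0 : ℝ) < 1 / Real.sqrt 3).trans hl1
  have hpair : l ^ 2 + l ^ 2 ≤ 1 := by
    have := pow_le_pow_left₀ hl.le hl2 2
    rw [div_pow, Real.sq_sqrt zero_le_two] at this
    linarith
  have htriple : 1 < l ^ 2 + l ^ 2 + l ^ 2 := by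
    have := pow_lt_pow_left₀ hl1 (by positivity) two_ne_zero
    rw [div_pow, Real.sq_sqrt zero_le_three] at this
    linarith
  exact ⟨jointlyMeasurable2_of_inner_eq_zero hab (by rwa [hna, hnb]),
    jointlyMeasurable2_of_inner_eq_zero hac (by rwa [hna, hnc]),
    jointlyMeasurable2_of_inner_eq_zero hbc (by rwa [hnb, hnc]),
    not_jointlyMeasurable3_of_inner_eq_zero hab hac hbc (by rwa [hna, hnb, hnc])⟩
end
end

section
/- Let P be an orthogonal projection on a complex Hilbert space H and let B be an effect on H with PB = BP. Then PB is an effect, PB ≤ P, PB ≤ B, and PB is the greatest element of lb(P,B): for every effect C with C ≤ P and C ≤ B, one has C ≤ PB. -/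
/-!
Everything happens in the C⋆-algebra `H →L[ℂ] H` with its Loewner order. As `P` commutes with
`B`, we have `PB = PBP`, `P - PB = P(1 - B)P` and `B - PB = (1 - P)B(1 - P)`, so `0 ≤ PB ≤ P`
and `PB ≤ B` are conjugates of `0 ≤ B ≤ 1`. For maximality, `0 ≤ C ≤ P` forces `(1 - P)C(1 - P) = 0`, hence
`C(1 - P) = 0` by the C⋆-identity applied to `√C (1 - P)`; thus `C = PCP ≤ PBP = PB`.
-/

lemma mul_eq_zero_of_star_mul_mul_eq_zero {A : Type*} [NonUnitalCStarAlgebra A] [PartialOrder A]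
    [StarOrderedRing A] {a b : A} (ha : 0 ≤ a) (h : star b * a * b = 0) : a * b = 0 := by
  set s := CFC.sqrt a
  have hs : IsSelfAdjoint s := (CFC.sqrt_nonneg a).isSelfAdjoint
  have hsb : s * b = 0 := by
    rw [← CStarRing.star_mul_self_eq_zero_iff, star_mul, hs.star_eq, ← h,
      ← CFC.sqrt_mul_sqrt_self a]
    noncomm_ring
  rw [← CFC.sqrt_mul_sqrt_self a, mul_assoc, hsb, mul_zero]

namespace IsStarProjection

lemma mul_mul_self_of_commute {R : Type*} [Semigroup R] [Star R] {p b : R}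
    (hp : IsStarProjection p) (h : Commute p b) : p * b * p = p * b := by
  rw [mul_assoc, ← h.eq, ← mul_assoc, hp.isIdempotentElem.eq]

section StarOrderedRing

variable {R : Type*} [Ring R] [StarRing R] [PartialOrder R] [StarOrderedRing R] {p b : R}

lemma mul_nonneg_of_commute (hp : IsStarProjection p) (hb : 0 ≤ b) (h : Commute p b) :
    0 ≤ p * b := by
  simpa [hp.mul_mul_self_of_commute h, hp.isSelfAdjoint.star_eq] using
    star_left_conjugate_nonneg hb p

lemma mul_le_self_of_commute (hp : IsStarProjection p) (hb : b ≤ 1) (h : Commute p b) :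
    p * b ≤ p := by
  have := star_left_conjugate_le_conjugate hb p
  rwa [hp.isSelfAdjoint.star_eq, hp.mul_mul_self_of_commute h, mul_one,
    hp.isIdempotentElem.eq] at this

lemma mul_le_of_commute (hp : IsStarProjection p) (hb : 0 ≤ b) (h : Commute p b) :
    p * b ≤ b := by
  have hconj : star (1 - p) * b * (1 - p) = b - p * b := by
    rw [hp.one_sub.isSelfAdjoint.star_eq, sub_mul, one_mul, mul_sub, mul_one, sub_mul,
      hp.mul_mul_self_of_commute h, ← h.eq]
    abel
  rw [← sub_nonneg, ← hconj]
  exact star_left_conjugate_nonneg hb _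

end StarOrderedRing

section CStarAlgebra

variable {A : Type*} [CStarAlgebra A] [PartialOrder A] [StarOrderedRing A] {p b c : A}

lemma mul_eq_self_of_le (hp : IsStarProjection p) (hc : 0 ≤ c) (hcp : c ≤ p) : c * p = c := by
  have hzero : star (1 - p) * c * (1 - p) = 0 := by
    refine le_antisymm ?_ (star_left_conjugate_nonneg hc _)
    calc star (1 - p) * c * (1 - p) ≤ star (1 - p) * p * (1 - p) :=
          star_left_conjugate_le_conjugate hcp _
      _ = 0 := by
        rw [hp.one_sub.isSelfAdjoint.star_eq, sub_mul, one_mul, hp.isIdempotentElem.eq,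
          sub_self, zero_mul]
  have := mul_eq_zero_of_star_mul_mul_eq_zero hc hzero
  rwa [mul_sub, mul_one, sub_eq_zero, eq_comm] at this

lemma mul_mul_eq_self_of_le (hp : IsStarProjection p) (hc : 0 ≤ c) (hcp : c ≤ p) :
    p * c * p = c := by
  have hcp' := hp.mul_eq_self_of_le hc hcp
  have hpc : p * c = c := by
    simpa [hp.isSelfAdjoint.star_eq, hc.isSelfAdjoint.star_eq] using congrArg star hcp'
  rw [hpc, hcp']

lemma le_mul_of_commute (hp : IsStarProjection p) (h : Commute p b) (hc : 0 ≤ c)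
    (hcp : c ≤ p) (hcb : c ≤ b) : c ≤ p * b := by
  have := star_left_conjugate_le_conjugate hcb p
  rwa [hp.isSelfAdjoint.star_eq, hp.mul_mul_eq_self_of_le hc hcp,
    hp.mul_mul_self_of_commute h] at this

end CStarAlgebra

end IsStarProjection

/-- if `P` is an orthogonal projection, `B` is an effect and `PB = BP`,
then `PB` is an effect, `PB ≤ P`, `PB ≤ B`, and `PB` is the greatest element of
`lb(P,B)`; here `S ≤ T` is the Loewner order, expressed as `(T - S).IsPositive`. -/
theorem projection_mul_effect_greatest_lower_bound
    {H : Type*} [NormedAddCommGroup H] [InnerProductSpace ℂ H] [CompleteSpace H]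
    (P B : H →L[ℂ] H)
    (hP_sa : IsSelfAdjoint P) (hP_idem : P ∘L P = P)
    (hB_pos : B.IsPositive) (hB_le_one : ((1 : H →L[ℂ] H) - B).IsPositive)
    (hcomm : P ∘L B = B ∘L P) :
    ((P ∘L B).IsPositive ∧ ((1 : H →L[ℂ] H) - P ∘L B).IsPositive) ∧
      (P - P ∘L B).IsPositive ∧ (B - P ∘L B).IsPositive ∧
      ∀ C : H →L[ℂ] H, C.IsPositive → ((1 : H →L[ℂ] H) - C).IsPositive →
        (P - C).IsPositive → (B - C).IsPositive → (P ∘L B - C).IsPositive := by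
  simp only [← ContinuousLinearMap.nonneg_iff_isPositive, sub_nonneg]
    at hB_pos hB_le_one ⊢
  have hP : IsStarProjection P := ⟨hP_idem, hP_sa⟩
  have hPB_le_P : P * B ≤ P := hP.mul_le_self_of_commute hB_le_one hcomm
  refine ⟨⟨hP.mul_nonneg_of_commute hB_pos hcomm, hPB_le_P.trans hP.le_one⟩, hPB_le_P,
    hP.mul_le_of_commute hB_pos hcomm, fun C hC _ hCP hCB ↦ ?_⟩
  exact hP.le_mul_of_commute hcomm hC hCP hCB
end

section
/- Let A and B be jointly measurable observables on a complex separable Hilbert space, with outcome spaces (Ω₁,Σ₁) and (Ω₂,Σ₂), and let G be a joint observable of A and B which is the greatest joint observable. Then G is the unique joint observable of A and B: every joint observable F of A and B equals G. -/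
open MeasureTheory

noncomputable section

variable (H : Type*) [NormedAddCommGroup H] [InnerProductSpace ℂ H] [CompleteSpace H]

/-- A quantum observable (normalized positive operator valued measure) on the outcome
space `Ω`: a map assigning to each (measurable) set a bounded operator on `H`, which is
positive on measurable sets, normalized, and weakly countably additive. -/
structure Observable (Ω : Type*) [MeasurableSpace Ω] where
  app : Set Ω → (H →L[ℂ] H)
  isPositive : ∀ X : Set Ω, MeasurableSet X → (app X).IsPositive
  app_univ : app Set.univ = 1
  hasSum : ∀ (ψ : H) (X : ℕ → Set Ω), (∀ n, MeasurableSet (X n)) →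
    Pairwise (Function.onFun Disjoint X) →
    HasSum (fun n => (inner ℂ ψ (app (X n) ψ) : ℂ)) (inner ℂ ψ (app (⋃ n, X n) ψ) : ℂ)

variable {H}

/-- An observable is sharp if its values (on measurable sets) are orthogonal projections. -/
def Observable.Sharp {Ω : Type*} [MeasurableSpace Ω] (A : Observable H Ω) : Prop :=
  ∀ X : Set Ω, MeasurableSet X → IsSelfAdjoint (A.app X) ∧ A.app X ∘L A.app X = A.app X

/-- `G` is a joint observable of `A` and `B`: its margins are `A` and `B`.
The product type `Ω₁ × Ω₂` carries the product σ-algebra. -/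
def IsJointObservable {Ω₁ Ω₂ : Type*} [MeasurableSpace Ω₁] [MeasurableSpace Ω₂]
    (A : Observable H Ω₁) (B : Observable H Ω₂) (G : Observable H (Ω₁ × Ω₂)) : Prop :=
  (∀ X : Set Ω₁, MeasurableSet X → G.app (X ×ˢ (Set.univ : Set Ω₂)) = A.app X) ∧
  (∀ Y : Set Ω₂, MeasurableSet Y → G.app ((Set.univ : Set Ω₁) ×ˢ Y) = B.app Y)

/-- Two observables are jointly measurable if they have a joint observable. -/
def JointlyMeasurable {Ω₁ Ω₂ : Type*} [MeasurableSpace Ω₁] [MeasurableSpace Ω₂]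
    (A : Observable H Ω₁) (B : Observable H Ω₂) : Prop :=
  ∃ G : Observable H (Ω₁ × Ω₂), IsJointObservable A B G


/-!
For a joint observable `F` of `A` and `B`, the effect `F (X × Y)` lies below both `A X` and
`B Y`, hence below `G (X × Y)`. The same holds for `X × Yᶜ`, and both `F` and `G` split `A X`
as the sum of their effects on `X × Y` and `X × Yᶜ`; so the two inequalities are equalities.
For every vector `ψ`, `Z ↦ ⟪ψ, F Z ψ⟫` is a finite measure, so agreement on the π-system of
rectangles propagates to all measurable sets, and a self-adjoint operator is determined by its
quadratic form.
-/

open MeasureTheory Set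
open scoped InnerProductSpace

theorem ContinuousLinearMap.le_iff_forall_re_inner_le {E : Type*} [NormedAddCommGroup E]
    [InnerProductSpace ℂ E] {S T : E →L[ℂ] E} (hS : (S : E →ₗ[ℂ] E).IsSymmetric)
    (hT : (T : E →ₗ[ℂ] E).IsSymmetric) :
    S ≤ T ↔ ∀ x, (⟪x, S x⟫_ℂ).re ≤ (⟪x, T x⟫_ℂ).re := by
  rw [le_def, isPositive_def, ContinuousLinearMap.toLinearMap_sub]
  simp only [hT.sub hS, true_and, reApplyInnerSelf_apply, sub_apply, inner_sub_left, map_sub,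
    sub_nonneg]
  refine forall_congr' fun x => ?_
  rw [inner_re_symm (S x), inner_re_symm (T x)]
  rfl

theorem MeasureTheory.Measure.eq_of_le_of_le_of_union_eq {α : Type*} [MeasurableSpace α]
    {μ ν : Measure α} [IsFiniteMeasure μ] {s t : Set α} (ht : MeasurableSet t)
    (hst : Disjoint s t) (hs : μ s ≤ ν s) (hμνt : μ t ≤ ν t) (h : μ (s ∪ t) = ν (s ∪ t)) :
    μ s = ν s := by
  refine le_antisymm hs (ENNReal.le_of_add_le_add_right (measure_ne_top μ t) ?_)
  calc ν s + μ t ≤ ν s + ν t := by gcongr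
    _ = μ s + μ t := by rw [← measure_union hst ht, ← measure_union hst ht, h]

namespace Observable

variable {E : Type*} [NormedAddCommGroup E] [InnerProductSpace ℂ E]
  {Ω Ω' : Type*} [MeasurableSpace Ω] [MeasurableSpace Ω'] (F : Observable E Ω)

theorem re_inner_app_nonneg {Z : Set Ω} (hZ : MeasurableSet Z) (ψ : E) :
    0 ≤ (⟪ψ, F.app Z ψ⟫_ℂ).re :=
  (F.isPositive Z hZ).re_inner_nonneg_right ψ

theorem inner_app_empty (ψ : E) : ⟪ψ, F.app ∅ ψ⟫_ℂ = 0 := by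
  have h := F.hasSum ψ (fun _ => ∅) (fun _ => .empty) (fun _ _ _ => disjoint_bot_left)
  rw [iUnion_empty] at h
  exact (summable_const_iff _).1 h.summable

/-- The outcome distribution of `F` in the (unnormalized) vector state `ψ`. -/
noncomputable def measure (ψ : E) : Measure Ω :=
  Measure.ofMeasurable (fun Z _ => ENNReal.ofReal (⟪ψ, F.app Z ψ⟫_ℂ).re)
    (by simp [F.inner_app_empty])
    (fun f hf hd => by
      have h := Complex.hasSum_re (F.hasSum ψ f hf hd)
      rw [← h.tsum_eq, ENNReal.ofReal_tsum_of_nonneg (fun i => F.re_inner_app_nonneg (hf i) ψ)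
        h.summable])

theorem measure_apply (ψ : E) {Z : Set Ω} (hZ : MeasurableSet Z) :
    F.measure ψ Z = ENNReal.ofReal (⟪ψ, F.app Z ψ⟫_ℂ).re :=
  Measure.ofMeasurable_apply Z hZ

instance (ψ : E) : IsFiniteMeasure (F.measure ψ) :=
  ⟨by rw [F.measure_apply ψ .univ]; exact ENNReal.ofReal_lt_top⟩

theorem app_le_app_iff (G : Observable E Ω') {Z : Set Ω} {Z' : Set Ω'} (hZ : MeasurableSet Z)
    (hZ' : MeasurableSet Z') : F.app Z ≤ G.app Z' ↔ ∀ ψ, F.measure ψ Z ≤ G.measure ψ Z' := by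
  rw [ContinuousLinearMap.le_iff_forall_re_inner_le (F.isPositive Z hZ).isSymmetric
    (G.isPositive Z' hZ').isSymmetric]
  refine forall_congr' fun ψ => ?_
  rw [F.measure_apply ψ hZ, G.measure_apply ψ hZ',
    ENNReal.ofReal_le_ofReal_iff (G.re_inner_app_nonneg hZ' ψ)]

theorem app_eq_app_iff (G : Observable E Ω') {Z : Set Ω} {Z' : Set Ω'} (hZ : MeasurableSet Z)
    (hZ' : MeasurableSet Z') : F.app Z = G.app Z' ↔ ∀ ψ, F.measure ψ Z = G.measure ψ Z' := by
  simp only [le_antisymm_iff, F.app_le_app_iff G hZ hZ', G.app_le_app_iff F hZ' hZ,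
    forall_and]

theorem app_mono {Z₁ Z₂ : Set Ω} (h₁ : MeasurableSet Z₁) (h₂ : MeasurableSet Z₂)
    (h : Z₁ ⊆ Z₂) : F.app Z₁ ≤ F.app Z₂ :=
  (F.app_le_app_iff F h₁ h₂).2 fun _ => measure_mono h

theorem app_le_one {Z : Set Ω} (hZ : MeasurableSet Z) : F.app Z ≤ 1 :=
  F.app_univ ▸ F.app_mono hZ .univ (subset_univ Z)

end Observable

namespace IsJointObservable

variable {E : Type*} [NormedAddCommGroup E] [InnerProductSpace ℂ E]
  {Ω₁ Ω₂ : Type*} [MeasurableSpace Ω₁] [MeasurableSpace Ω₂] {A : Observable E Ω₁}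
  {B : Observable E Ω₂} {F G : Observable E (Ω₁ × Ω₂)} {X : Set Ω₁} {Y : Set Ω₂}

theorem measure_prod_univ (hF : IsJointObservable A B F) (hX : MeasurableSet X) (ψ : E) :
    F.measure ψ (X ×ˢ univ) = A.measure ψ X := by
  rw [F.measure_apply ψ (hX.prod .univ), hF.1 X hX, A.measure_apply ψ hX]

theorem app_prod_le_left (hF : IsJointObservable A B F) (hX : MeasurableSet X)
    (hY : MeasurableSet Y) : F.app (X ×ˢ Y) ≤ A.app X :=
  hF.1 X hX ▸ F.app_mono (hX.prod hY) (hX.prod .univ) (prod_mono le_rfl (subset_univ Y))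

theorem app_prod_le_right (hF : IsJointObservable A B F) (hX : MeasurableSet X)
    (hY : MeasurableSet Y) : F.app (X ×ˢ Y) ≤ B.app Y :=
  hF.2 Y hY ▸
    F.app_mono (hX.prod hY) (MeasurableSet.univ.prod hY) (prod_mono (subset_univ X) le_rfl)

theorem measure_eq_of_forall_app_prod_le (hF : IsJointObservable A B F)
    (hG : IsJointObservable A B G)
    (hle : ∀ (X : Set Ω₁) (Y : Set Ω₂), MeasurableSet X → MeasurableSet Y →
      F.app (X ×ˢ Y) ≤ G.app (X ×ˢ Y)) (ψ : E) :
    F.measure ψ = G.measure ψ := by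
  have hle_measure {X : Set Ω₁} {Y : Set Ω₂} (hX : MeasurableSet X) (hY : MeasurableSet Y) :
      F.measure ψ (X ×ˢ Y) ≤ G.measure ψ (X ×ˢ Y) :=
    (F.app_le_app_iff G (hX.prod hY) (hX.prod hY)).1 (hle X Y hX hY) ψ
  refine ext_of_generate_finite _ generateFrom_prod.symm isPiSystem_prod ?_ ?_
  · rintro _ ⟨X, hX, Y, hY, rfl⟩
    refine Measure.eq_of_le_of_le_of_union_eq (hX.prod hY.compl)
      (disjoint_prod.2 (Or.inr disjoint_compl_right)) (hle_measure hX hY)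
      (hle_measure hX hY.compl) ?_
    rw [← prod_union, union_compl_self, hF.measure_prod_univ hX, hG.measure_prod_univ hX]
  · rw [F.measure_apply ψ .univ, G.measure_apply ψ .univ, F.app_univ, G.app_univ]

theorem app_eq_of_forall_app_prod_le (hF : IsJointObservable A B F)
    (hG : IsJointObservable A B G)
    (hle : ∀ (X : Set Ω₁) (Y : Set Ω₂), MeasurableSet X → MeasurableSet Y →
      F.app (X ×ˢ Y) ≤ G.app (X ×ˢ Y))
    {Z : Set (Ω₁ × Ω₂)} (hZ : MeasurableSet Z) : F.app Z = G.app Z :=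
  (F.app_eq_app_iff G hZ hZ).2 fun ψ => by rw [hF.measure_eq_of_forall_app_prod_le hG hle ψ]

end IsJointObservable

theorem greatest_joint_observable_unique_general
    {H : Type*} [NormedAddCommGroup H] [InnerProductSpace ℂ H]
    {Ω₁ Ω₂ : Type*} [MeasurableSpace Ω₁] [MeasurableSpace Ω₂]
    (A : Observable H Ω₁) (B : Observable H Ω₂)
    (G : Observable H (Ω₁ × Ω₂)) (hG : IsJointObservable A B G)
    (hGreatest : ∀ (X : Set Ω₁) (Y : Set Ω₂), MeasurableSet X → MeasurableSet Y →
      ∀ C : H →L[ℂ] H, C.IsPositive → ((1 : H →L[ℂ] H) - C).IsPositive →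
        (A.app X - C).IsPositive → (B.app Y - C).IsPositive →
        (G.app (X ×ˢ Y) - C).IsPositive)
    (F : Observable H (Ω₁ × Ω₂)) (hF : IsJointObservable A B F) :
    ∀ Z : Set (Ω₁ × Ω₂), MeasurableSet Z → F.app Z = G.app Z := by
  intro Z hZ
  refine hF.app_eq_of_forall_app_prod_le hG (fun X Y hX hY => ?_) hZ
  -- `(T - C).IsPositive` is the Loewner inequality `C ≤ T` by definition.
  exact hGreatest X Y hX hY _ (F.isPositive _ (hX.prod hY)) (F.app_le_one (hX.prod hY))
    (hF.app_prod_le_left hX hY) (hF.app_prod_le_right hX hY)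

/-- if `G` is the greatest joint observable of `A` and `B` (that is, each
`G(X × Y)` is the greatest element of `lb(A(X), B(Y))`), then `G` is the unique joint
observable of `A` and `B`. -/
theorem greatest_joint_observable_unique
    {H : Type*} [NormedAddCommGroup H] [InnerProductSpace ℂ H] [CompleteSpace H]
    [TopologicalSpace.SeparableSpace H]
    {Ω₁ Ω₂ : Type*} [MeasurableSpace Ω₁] [MeasurableSpace Ω₂]
    (A : Observable H Ω₁) (B : Observable H Ω₂)
    (G : Observable H (Ω₁ × Ω₂)) (hG : IsJointObservable A B G)
    (hGreatest : ∀ (X : Set Ω₁) (Y : Set Ω₂), MeasurableSet X → MeasurableSet Y →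
      ∀ C : H →L[ℂ] H, C.IsPositive → ((1 : H →L[ℂ] H) - C).IsPositive →
        (A.app X - C).IsPositive → (B.app Y - C).IsPositive →
        (G.app (X ×ˢ Y) - C).IsPositive)
    (F : Observable H (Ω₁ × Ω₂)) (hF : IsJointObservable A B F) :
    ∀ Z : Set (Ω₁ × Ω₂), MeasurableSet Z → F.app Z = G.app Z :=
  greatest_joint_observable_unique_general A B G hG hGreatest F hF
end
end

section
/- Let A and B be jointly measurable observables on a complex separable Hilbert space, with outcome spaces (Ω₁,Σ₁) and (Ω₂,Σ₂), and suppose A is sharp. Then A and B commute, i.e., A(X)B(Y) = B(Y)A(X) for all X ∈ Σ₁, Y ∈ Σ₂; every joint observable G of A and B satisfies G(X×Y) = A(X)B(Y) for all X ∈ Σ₁, Y ∈ Σ₂; and consequently the joint observable of A and B is unique. -/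
open MeasureTheory

noncomputable section

variable (H : Type*) [NormedAddCommGroup H] [InnerProductSpace ℂ H] [CompleteSpace H]

variable {H}

/-!
Splitting `B(Y) = G(X × Y) + G(Xᶜ × Y)`, the two summands are effects dominated by the
projections `A(X)` and `A(Xᶜ) = 1 - A(X)` respectively. An effect `0 ≤ E ≤ P` below a
projection is absorbed by it (`E P = P E = E`), so `A(X) B(Y) = G(X × Y) = B(Y) A(X)`.
Uniqueness follows because an observable on the product σ-algebra is determined by its values
on measurable rectangles, by the π-λ theorem applied to the quadratic forms `⟪ψ, G(·) ψ⟫`.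
-/

open scoped InnerProductSpace

theorem ContinuousLinearMap.ext_inner_apply_self {E : Type*} [NormedAddCommGroup E]
    [InnerProductSpace ℂ E] {S T : E →L[ℂ] E} (h : ∀ x, ⟪x, S x⟫_ℂ = ⟪x, T x⟫_ℂ) : S = T :=
  coe_injective <| (ext_inner_map _ _).1 fun x => by
    rw [← inner_conj_symm, coe_coe, h, inner_conj_symm, coe_coe]

theorem IsStarProjection.mul_add_eq_and_add_mul_eq {A : Type*} [CStarAlgebra A] [PartialOrder A]
    [StarOrderedRing A] {p a b : A} (hp : IsStarProjection p) (ha : 0 ≤ a) (hap : a ≤ p)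
    (hb : 0 ≤ b) (hbp : b ≤ 1 - p) : p * (a + b) = a ∧ (a + b) * p = a := by
  obtain ⟨ha_right, ha_left⟩ := hp.mul_right_and_mul_left_of_nonneg_of_le ha hap
  obtain ⟨hb_right, hb_left⟩ := hp.one_sub.mul_right_and_mul_left_of_nonneg_of_le hb hbp
  have hpb : p * b = 0 := by rw [← hb_left, ← mul_assoc, hp.mul_one_sub_self, zero_mul]
  have hbp' : b * p = 0 := by rw [← hb_right, mul_assoc, hp.one_sub_mul_self, mul_zero]
  exact ⟨by rw [mul_add, ha_left, hpb, add_zero], by rw [add_mul, ha_right, hbp', add_zero]⟩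

namespace Observable

variable {H : Type*} [NormedAddCommGroup H] [InnerProductSpace ℂ H]
  {Ω : Type*} [MeasurableSpace Ω]

theorem app_empty (G : Observable H Ω) : G.app ∅ = 0 := by
  refine ContinuousLinearMap.ext_inner_apply_self fun ψ => ?_
  have h := G.hasSum ψ (fun _ => ∅) (fun _ => .empty) fun _ _ _ => disjoint_bot_left
  rw [Set.iUnion_empty] at h
  simpa using tendsto_nhds_unique tendsto_const_nhds h.summable.tendsto_cofinite_zero

def toVectorMeasure (G : Observable H Ω) (ψ : H) : VectorMeasure Ω ℂ where
  measureOf' X := open Classical in if MeasurableSet X then ⟪ψ, G.app X ψ⟫_ℂ else 0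
  empty' := by simp [G.app_empty]
  not_measurable' _ hX := if_neg hX
  m_iUnion' X hX hdisj := by
    simpa only [if_pos (hX _), if_pos (MeasurableSet.iUnion hX)] using G.hasSum ψ X hX hdisj

theorem app_union (G : Observable H Ω) {X Y : Set Ω} (hX : MeasurableSet X)
    (hY : MeasurableSet Y) (hXY : Disjoint X Y) : G.app (X ∪ Y) = G.app X + G.app Y := by
  refine ContinuousLinearMap.ext_inner_apply_self fun ψ => ?_
  have h := (G.toVectorMeasure ψ).of_union hXY hX hY
  simpa [toVectorMeasure, VectorMeasure.coe_mk, hX, hY, hX.union hY, inner_add_right] using h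

theorem app_compl (G : Observable H Ω) {X : Set Ω} (hX : MeasurableSet X) :
    G.app Xᶜ = 1 - G.app X := by
  rw [eq_sub_iff_add_eq', ← G.app_union hX hX.compl disjoint_compl_right, Set.union_compl_self,
    G.app_univ]

theorem app_nonneg (G : Observable H Ω) {X : Set Ω} (hX : MeasurableSet X) : 0 ≤ G.app X :=
  (ContinuousLinearMap.nonneg_iff_isPositive _).2 (G.isPositive X hX)

theorem app_mono_s19 [CompleteSpace H] (G : Observable H Ω) {X Y : Set Ω} (hX : MeasurableSet X)
    (hY : MeasurableSet Y) (hXY : X ⊆ Y) : G.app X ≤ G.app Y := by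
  rw [← Set.union_sdiff_cancel hXY, G.app_union hX (hY.diff hX) Set.disjoint_sdiff_right]
  exact le_add_of_nonneg_right (G.app_nonneg (hY.diff hX))

theorem Sharp.isStarProjection [CompleteSpace H] {A : Observable H Ω} (hA : A.Sharp) {X : Set Ω}
    (hX : MeasurableSet X) : IsStarProjection (A.app X) :=
  ⟨(hA X hX).2, (hA X hX).1⟩

theorem app_eq_of_isPiSystem {G G' : Observable H Ω} {S : Set (Set Ω)}
    (h_gen : ‹MeasurableSpace Ω› = MeasurableSpace.generateFrom S) (hS : IsPiSystem S)
    (h_eq : ∀ s ∈ S, G.app s = G'.app s) {Z : Set Ω} (hZ : MeasurableSet Z) :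
    G.app Z = G'.app Z := by
  induction Z, hZ using MeasurableSpace.induction_on_inter h_gen hS with
  | empty => rw [G.app_empty, G'.app_empty]
  | basic s hs => exact h_eq s hs
  | compl s hs ih => rw [G.app_compl hs, G'.app_compl hs, ih]
  | iUnion X hdisj hX ih =>
    refine ContinuousLinearMap.ext_inner_apply_self fun ψ => ?_
    exact (G.hasSum ψ X hX hdisj).unique (by simpa only [ih] using G'.hasSum ψ X hX hdisj)

end Observable

namespace IsJointObservable

variable {H : Type*} [NormedAddCommGroup H] [InnerProductSpace ℂ H]
  {Ω₁ Ω₂ : Type*} [MeasurableSpace Ω₁] [MeasurableSpace Ω₂]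
  {A : Observable H Ω₁} {B : Observable H Ω₂} {G : Observable H (Ω₁ × Ω₂)}

theorem app_prod_le_left_s19 [CompleteSpace H] (hG : IsJointObservable A B G) {X : Set Ω₁}
    {Y : Set Ω₂} (hX : MeasurableSet X) (hY : MeasurableSet Y) : G.app (X ×ˢ Y) ≤ A.app X := by
  rw [← hG.1 X hX]
  exact G.app_mono_s19 (hX.prod hY) (hX.prod .univ) (Set.prod_mono le_rfl (Set.subset_univ Y))

theorem app_add_app_compl_prod (hG : IsJointObservable A B G) {X : Set Ω₁} {Y : Set Ω₂}
    (hX : MeasurableSet X) (hY : MeasurableSet Y) :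
    G.app (X ×ˢ Y) + G.app (Xᶜ ×ˢ Y) = B.app Y := by
  rw [← G.app_union (hX.prod hY) (hX.compl.prod hY)
    (Set.disjoint_prod.2 (.inl disjoint_compl_right)), ← Set.union_prod, Set.union_compl_self,
    hG.2 Y hY]

theorem comp_and_comp_swap_eq_app_prod [CompleteSpace H] (hA : A.Sharp)
    (hG : IsJointObservable A B G)
    {X : Set Ω₁} {Y : Set Ω₂} (hX : MeasurableSet X) (hY : MeasurableSet Y) :
    A.app X ∘L B.app Y = G.app (X ×ˢ Y) ∧ B.app Y ∘L A.app X = G.app (X ×ˢ Y) := by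
  have hcompl : G.app (Xᶜ ×ˢ Y) ≤ 1 - A.app X := by
    rw [← A.app_compl hX]
    exact hG.app_prod_le_left_s19 hX.compl hY
  rw [← hG.app_add_app_compl_prod hX hY]
  exact (hA.isStarProjection hX).mul_add_eq_and_add_mul_eq (G.app_nonneg (hX.prod hY))
    (hG.app_prod_le_left_s19 hX hY) (G.app_nonneg (hX.compl.prod hY)) hcompl

end IsJointObservable

theorem sharp_jointly_measurable_commute_unique_general
    {H : Type*} [NormedAddCommGroup H] [InnerProductSpace ℂ H] [CompleteSpace H]
    {Ω₁ Ω₂ : Type*} [MeasurableSpace Ω₁] [MeasurableSpace Ω₂]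
    (A : Observable H Ω₁) (B : Observable H Ω₂)
    (hA : A.Sharp) (hJM : JointlyMeasurable A B) :
    (∀ (X : Set Ω₁) (Y : Set Ω₂), MeasurableSet X → MeasurableSet Y →
      A.app X ∘L B.app Y = B.app Y ∘L A.app X) ∧
    (∀ G : Observable H (Ω₁ × Ω₂), IsJointObservable A B G →
      ∀ (X : Set Ω₁) (Y : Set Ω₂), MeasurableSet X → MeasurableSet Y →
        G.app (X ×ˢ Y) = A.app X ∘L B.app Y) ∧
    (∀ G G' : Observable H (Ω₁ × Ω₂), IsJointObservable A B G → IsJointObservable A B G' →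
      ∀ Z : Set (Ω₁ × Ω₂), MeasurableSet Z → G.app Z = G'.app Z) := by
  have h_prod := fun {G} (hG : IsJointObservable A B G) {X Y} (hX : MeasurableSet X)
    (hY : MeasurableSet Y) => hG.comp_and_comp_swap_eq_app_prod hA hX hY
  obtain ⟨G₀, hG₀⟩ := hJM
  refine ⟨fun X Y hX hY => ?_, fun G hG X Y hX hY => (h_prod hG hX hY).1.symm, ?_⟩
  · rw [(h_prod hG₀ hX hY).1, (h_prod hG₀ hX hY).2]
  · intro G G' hG hG' Z hZ
    refine Observable.app_eq_of_isPiSystem generateFrom_prod.symm isPiSystem_prod ?_ hZ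
    rintro _ ⟨X, hX, Y, hY, rfl⟩
    rw [(h_prod hG hX hY).1.symm, (h_prod hG' hX hY).1]

/-- if `A` is sharp and `A`, `B` are jointly measurable, then `A` and `B`
commute, every joint observable `G` satisfies `G(X × Y) = A(X)B(Y)`, and the joint
observable is unique. -/
theorem sharp_jointly_measurable_commute_unique
    {H : Type*} [NormedAddCommGroup H] [InnerProductSpace ℂ H] [CompleteSpace H]
    [TopologicalSpace.SeparableSpace H]
    {Ω₁ Ω₂ : Type*} [MeasurableSpace Ω₁] [MeasurableSpace Ω₂]
    (A : Observable H Ω₁) (B : Observable H Ω₂)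
    (hA : A.Sharp) (hJM : JointlyMeasurable A B) :
    (∀ (X : Set Ω₁) (Y : Set Ω₂), MeasurableSet X → MeasurableSet Y →
      A.app X ∘L B.app Y = B.app Y ∘L A.app X) ∧
    (∀ G : Observable H (Ω₁ × Ω₂), IsJointObservable A B G →
      ∀ (X : Set Ω₁) (Y : Set Ω₂), MeasurableSet X → MeasurableSet Y →
        G.app (X ×ˢ Y) = A.app X ∘L B.app Y) ∧
    (∀ G G' : Observable H (Ω₁ × Ω₂), IsJointObservable A B G → IsJointObservable A B G' →
      ∀ Z : Set (Ω₁ × Ω₂), MeasurableSet Z → G.app Z = G'.app Z) :=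
  sharp_jointly_measurable_commute_unique_general A B hA hJM
end
end
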